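/- Let G be a torsion-free group of nilpotency class at most 2. Then: (i) any two elements of G lying in the same connected component of the power graph P(G) generate a cyclic subgroup of G; and (ii) for every connected component C of P(G), the set C ∪ {1} is a subgroup of G. -/

import Mathlib

/-- The power graph of a group `G`: distinct `x, y` are adjacent iff one is a
nonzero integer power of the other. -/
def powerGraph (G : Type*) [Group G] : SimpleGraph G where
  Adj x y := x ≠ y ∧ ∃ n : ℤ, n ≠ 0 ∧ (y = x ^ n ∨ x = y ^ n)
  symm := by
    refine ⟨?_⟩
    rintro x y ⟨hxy, n, hn, h⟩
    exact ⟨hxy.symm, n, hn, h.symm⟩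
  loopless := ⟨by rintro x ⟨h, -⟩; exact h rfl⟩

/-- There is an arc `x → y` in the directed power graph iff `x ≠ y` and `y` is a
nonzero integer power of `x`. -/
def powArc {G : Type*} [Group G] (x y : G) : Prop :=
  x ≠ y ∧ ∃ n : ℤ, n ≠ 0 ∧ y = x ^ n

/-!
If `x` and `y` lie in one component of the power graph, composing the powers along a path gives
`x ^ a = y ^ b` with `a, b ≠ 0`. In class at most 2 the commutator `c = ⁅x, y⁆` is central, so
`⁅x ^ a, y⁆ = c ^ a`; as `x ^ a = y ^ b` commutes with `y`, this gives `c ^ a = 1`, hence `c = 1`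
by torsion-freeness. Dividing `a, b` by their gcd `d` and extracting a `d`-th root (unique for
commuting elements of a torsion-free group) makes them coprime, and then a Bézout combination of
`x` and `y` generates both. For (ii), every element is joined to its nonzero powers, so inside a
component a product `x * y = g ^ (s + t)` with `x = g ^ s`, `y = g ^ t` stays joined to `x`
through `g` unless it is `1`.
-/

open scoped commutatorElement

section

variable {G : Type*} [Group G]

lemma eq_one_of_zpow_eq_one (htf : ∀ g : G, g ≠ 1 → ¬ IsOfFinOrder g) {g : G} {n : ℤ}
    (hn : n ≠ 0) (h : g ^ n = 1) : g = 1 := by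
  by_contra hg
  exact htf g hg (isOfFinOrder_iff_zpow_eq_one.mpr ⟨n, hn, h⟩)

lemma Commute.eq_of_zpow_eq_zpow (htf : ∀ g : G, g ≠ 1 → ¬ IsOfFinOrder g) {u v : G}
    (huv : Commute u v) {n : ℤ} (hn : n ≠ 0) (h : u ^ n = v ^ n) : u = v := by
  rw [← div_eq_one]
  refine eq_one_of_zpow_eq_one htf hn ?_
  rw [div_eq_mul_inv, (huv.inv_right).mul_zpow, inv_zpow, h, mul_inv_cancel]

lemma commutatorElement_pow_left {x y : G} (hx : Commute x ⁅x, y⁆) (n : ℕ) :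
    ⁅x ^ n, y⁆ = ⁅x, y⁆ ^ n := by
  induction n with
  | zero => simp
  | succ n ih =>
    calc ⁅x ^ (n + 1), y⁆ = x * ⁅x ^ n, y⁆ * x⁻¹ * ⁅x, y⁆ := by
          simp only [commutatorElement_def]; group
      _ = ⁅x, y⁆ ^ (n + 1) := by
          rw [ih, (hx.pow_right n).eq, mul_inv_cancel_right, pow_succ]

lemma Commute.of_zpow_left_of_commute_commutatorElement
    (htf : ∀ g : G, g ≠ 1 → ¬ IsOfFinOrder g) {x y : G} (hx : Commute x ⁅x, y⁆) {n : ℤ}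
    (hn : n ≠ 0) (h : Commute (x ^ n) y) : Commute x y := by
  have habs : Commute (x ^ (n.natAbs : ℤ)) y := by
    rw [← Int.sign_mul_self_eq_natAbs, mul_comm, zpow_mul]
    exact h.zpow_left n.sign
  rw [← commutatorElement_eq_one_iff_commute]
  refine eq_one_of_zpow_eq_one htf (n := n.natAbs) (by omega) ?_
  rw [zpow_natCast, ← commutatorElement_pow_left hx, commutatorElement_eq_one_iff_commute]
  rwa [zpow_natCast] at habs

lemma Commute.exists_closure_pair_eq_zpowers_of_isCoprime {x y : G} (hxy : Commute x y)
    {a b : ℤ} (hab : IsCoprime a b) (h : x ^ a = y ^ b) :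
    ∃ g : G, Subgroup.closure {x, y} = Subgroup.zpowers g := by
  obtain ⟨u, v, huv⟩ := hab
  have hx : (x ^ v * y ^ u) ^ b = x := by
    rw [(hxy.zpow_zpow v u).mul_zpow, ← zpow_mul, ← zpow_mul, mul_comm u b, zpow_mul y b, ← h,
      ← zpow_mul, ← zpow_add, show v * b + a * u = 1 by linarith, zpow_one]
  have hy : (x ^ v * y ^ u) ^ a = y := by
    rw [(hxy.zpow_zpow v u).mul_zpow, ← zpow_mul, ← zpow_mul, mul_comm v a, zpow_mul x a, h,
      ← zpow_mul, ← zpow_add, show b * v + u * a = 1 by linarith, zpow_one]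
  refine ⟨x ^ v * y ^ u, le_antisymm ?_ ?_⟩
  · rw [Subgroup.closure_le, Set.insert_subset_iff, Set.singleton_subset_iff]
    exact ⟨⟨b, hx⟩, ⟨a, hy⟩⟩
  · rw [Subgroup.zpowers_le]
    exact mul_mem (zpow_mem (Subgroup.subset_closure (by simp)) v)
      (zpow_mem (Subgroup.subset_closure (by simp)) u)

lemma Commute.exists_closure_pair_eq_zpowers_of_zpow_eq_zpow
    (htf : ∀ g : G, g ≠ 1 → ¬ IsOfFinOrder g) {x y : G} (hxy : Commute x y) {a b : ℤ}
    (ha : a ≠ 0) (h : x ^ a = y ^ b) :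
    ∃ g : G, Subgroup.closure {x, y} = Subgroup.zpowers g := by
  obtain ⟨d, a', b', hd, hcop, rfl, rfl⟩ := Int.exists_gcd_one' (Int.gcd_pos_of_ne_zero_left b ha)
  refine hxy.exists_closure_pair_eq_zpowers_of_isCoprime
    (Int.isCoprime_iff_gcd_eq_one.mpr hcop) ?_
  refine (hxy.zpow_zpow a' b').eq_of_zpow_eq_zpow htf (n := d) (by omega) ?_
  rwa [← zpow_mul, ← zpow_mul]

lemma powerGraph_reachable_zpow (x : G) {n : ℤ} (hn : n ≠ 0) :
    (powerGraph G).Reachable x (x ^ n) := by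
  by_cases hx : x = x ^ n
  · exact hx ▸ SimpleGraph.Reachable.refl x
  · exact SimpleGraph.Adj.reachable ⟨hx, n, hn, Or.inl rfl⟩

lemma exists_zpow_eq_zpow_of_reachable {x y : G} (h : (powerGraph G).Reachable x y) :
    ∃ a b : ℤ, a ≠ 0 ∧ b ≠ 0 ∧ x ^ a = y ^ b := by
  obtain ⟨w⟩ := h
  induction w with
  | nil => exact ⟨1, 1, one_ne_zero, one_ne_zero, rfl⟩
  | cons hadj _ ih =>
    obtain ⟨a, b, ha, hb, hab⟩ := ih
    obtain ⟨-, n, hn, rfl | rfl⟩ := hadj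
    · exact ⟨n * a, b, mul_ne_zero hn ha, hb, by rw [zpow_mul, hab]⟩
    · exact ⟨a, b * n, ha, mul_ne_zero hb hn, by rw [← zpow_mul, mul_comm, zpow_mul, hab,
        ← zpow_mul]⟩

lemma powerGraph_inv_mem_supp_union_one {C : (powerGraph G).ConnectedComponent} {x : G}
    (hx : x ∈ C.supp ∪ {1}) : x⁻¹ ∈ C.supp ∪ {1} := by
  rcases hx with hx | rfl
  · left
    rw [SimpleGraph.ConnectedComponent.mem_supp_iff] at hx ⊢
    rw [← hx, ← zpow_neg_one]
    exact (SimpleGraph.ConnectedComponent.sound (powerGraph_reachable_zpow x (by norm_num))).symm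
  · simp

section TorsionFreeClassTwo

variable (htf : ∀ g : G, g ≠ 1 → ¬ IsOfFinOrder g) (hnil : commutator G ≤ Subgroup.center G)
include htf hnil

lemma exists_closure_pair_eq_zpowers_of_reachable {x y : G}
    (h : (powerGraph G).Reachable x y) :
    ∃ g : G, Subgroup.closure {x, y} = Subgroup.zpowers g := by
  obtain ⟨a, b, ha, -, hab⟩ := exists_zpow_eq_zpow_of_reachable h
  have hcentral : ⁅x, y⁆ ∈ Subgroup.center G :=
    hnil (Subgroup.commutator_mem_commutator (Subgroup.mem_top x) (Subgroup.mem_top y))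
  have hxy : Commute x y := by
    refine Commute.of_zpow_left_of_commute_commutatorElement htf
      (Subgroup.mem_center_iff.mp hcentral x) ha ?_
    rw [hab]
    exact (Commute.refl y).zpow_left b
  exact hxy.exists_closure_pair_eq_zpowers_of_zpow_eq_zpow htf ha hab

lemma powerGraph_reachable_mul {x y : G} (h : (powerGraph G).Reachable x y) (hx : x ≠ 1)
    (hxy : x * y ≠ 1) : (powerGraph G).Reachable x (x * y) := by
  obtain ⟨g, hg⟩ := exists_closure_pair_eq_zpowers_of_reachable htf hnil h
  obtain ⟨s, rfl⟩ : x ∈ Subgroup.zpowers g := hg ▸ Subgroup.subset_closure (by simp)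
  obtain ⟨t, rfl⟩ : y ∈ Subgroup.zpowers g := hg ▸ Subgroup.subset_closure (by simp)
  rw [← zpow_add] at hxy ⊢
  have hs : s ≠ 0 := by rintro rfl; exact hx (zpow_zero g)
  have hst : s + t ≠ 0 := by intro h0; rw [h0, zpow_zero] at hxy; exact hxy rfl
  exact (powerGraph_reachable_zpow g hs).symm.trans (powerGraph_reachable_zpow g hst)

lemma powerGraph_mul_mem_supp_union_one {C : (powerGraph G).ConnectedComponent} {x y : G}
    (hx : x ∈ C.supp ∪ {1}) (hy : y ∈ C.supp ∪ {1}) : x * y ∈ C.supp ∪ {1} := by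
  by_cases hx1 : x = 1
  · simpa [hx1] using hy
  by_cases hxy : x * y = 1
  · exact Or.inr hxy
  replace hx : x ∈ C.supp := hx.resolve_right hx1
  rcases hy with hy | rfl
  · have hreach := powerGraph_reachable_mul htf hnil (C.reachable_of_mem_supp hx hy) hx1 hxy
    left
    rw [SimpleGraph.ConnectedComponent.mem_supp_iff] at hx ⊢
    rw [← hx]
    exact (SimpleGraph.ConnectedComponent.sound hreach).symm
  · rw [mul_one]
    exact Or.inl hx

end TorsionFreeClassTwo

end

/-- In a torsion-free group of nilpotency class at most 2: (i) any two elements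
in the same connected component of the power graph generate a cyclic subgroup;
(ii) for every connected component `C`, the set `C ∪ {1}` is a subgroup. -/
theorem stmt_15 (G : Type*) [Group G]
    (htf : ∀ g : G, g ≠ 1 → ¬ IsOfFinOrder g)
    (hnil : commutator G ≤ Subgroup.center G) :
    (∀ x y : G, (powerGraph G).Reachable x y →
      IsCyclic ↥(Subgroup.closure {x, y})) ∧
    (∀ C : (powerGraph G).ConnectedComponent,
      ∃ S : Subgroup G, (S : Set G) = C.supp ∪ {1}) := by
  refine ⟨fun x y h => ?_, fun C => ?_⟩
  · obtain ⟨g, hg⟩ := exists_closure_pair_eq_zpowers_of_reachable htf hnil h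
    rw [hg]
    infer_instance
  · exact ⟨{ carrier := C.supp ∪ {1}
             one_mem' := Or.inr rfl
             mul_mem' := powerGraph_mul_mem_supp_union_one htf hnil
             inv_mem' := powerGraph_inv_mem_supp_union_one }, rfl⟩
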